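/- arXiv:1201.4496 — 2 statements merged into one kernel-verified Lean document; each statement's English description precedes it below -/
import Mathlib

section
/- Let d ≥ 1 and ε > 0. The regularization ρ_ε : ℝ^d → ℝ is twice continuously differentiable on all of ℝ^d (i.e., ρ_ε is of class C²). -/
noncomputable def rhoEps (d : ℕ) (ε : ℝ) (z : EuclideanSpace ℝ (Fin d)) : ℝ :=
  if ε ≤ ‖z‖ then ‖z‖ - (1 - 2 / Real.pi) * ε
  else (2 * ε / Real.pi) * (1 - Real.cos (Real.pi * ‖z‖ / (2 * ε)))

/-!
`ρ_ε = g ∘ ‖·‖` for a one-variable profile `g` whose two branches agree at `r = ε` to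
second order (value `2ε/π`, slope `1`, curvature `0`), so `g` is `C²`; away from the origin
the norm is smooth. Near the origin `ρ_ε(z) = (2ε/π) (1 - G (π² ‖z‖² / (4ε²)))`, where
`G t = ∑ (-t)ⁿ / (2n)!` is entire with `G (x²) = cos x`, and `‖z‖²` is smooth.
-/

open Real Set Nat FormalMultilinearSeries
section Gluing

variable {F : Type*} [NormedAddCommGroup F] [NormedSpace ℝ F]

theorem hasDerivAt_ite_le {a : ℝ} {f g f' g' : ℝ → F}
    (hf : ∀ x, HasDerivAt f (f' x) x) (hg : ∀ x, HasDerivAt g (g' x) x)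
    (ha : f a = g a) (ha' : f' a = g' a) (x : ℝ) :
    HasDerivAt (fun x => if a ≤ x then f x else g x) (if a ≤ x then f' x else g' x) x := by
  rcases lt_trichotomy x a with hx | rfl | hx
  · rw [if_neg hx.not_ge]
    refine (hg x).congr_of_eventuallyEq ?_
    filter_upwards [Iio_mem_nhds hx] with y hy
    rw [if_neg (not_le.mpr hy)]
  · rw [if_pos le_rfl]
    have hleft : HasDerivWithinAt (fun y => if x ≤ y then f y else g y) (f' x) (Iic x) x := by
      refine ha' ▸ (hg x).hasDerivWithinAt.congr (fun y hy => ?_) (by simp [ha])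
      rcases (mem_Iic.mp hy).lt_or_eq with hy | rfl
      · rw [if_neg hy.not_ge]
      · simp [ha]
    have hright : HasDerivWithinAt (fun y => if x ≤ y then f y else g y) (f' x) (Ici x) x :=
      (hf x).hasDerivWithinAt.congr (fun y hy => if_pos hy) (if_pos le_rfl)
    have := hleft.union hright
    rwa [Iic_union_Ici, hasDerivWithinAt_univ] at this
  · rw [if_pos hx.le]
    refine (hf x).congr_of_eventuallyEq ?_
    filter_upwards [Ioi_mem_nhds hx] with y hy
    rw [if_pos (le_of_lt hy)]

end Gluing

theorem contDiff_two_of_hasDerivAt {f f' f'' : ℝ → ℝ}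
    (hf : ∀ x, HasDerivAt f (f' x) x) (hf' : ∀ x, HasDerivAt f' (f'' x) x)
    (hf'' : Continuous f'') : ContDiff ℝ 2 f := by
  rw [show (2 : WithTop ℕ∞) = 1 + 1 from rfl, contDiff_succ_iff_deriv]
  refine ⟨fun x => (hf x).differentiableAt, by simp, ?_⟩
  rw [funext fun x => (hf x).deriv, contDiff_one_iff_deriv, funext fun x => (hf' x).deriv]
  exact ⟨fun x => (hf' x).differentiableAt, hf''⟩

section Profile

noncomputable def rhoProfile (ε r : ℝ) : ℝ :=
  if ε ≤ r then r - (1 - 2 / π) * ε else (2 * ε / π) * (1 - cos (π * r / (2 * ε)))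

noncomputable def rhoProfileDeriv (ε r : ℝ) : ℝ :=
  if ε ≤ r then 1 else sin (π * r / (2 * ε))

noncomputable def rhoProfileDeriv2 (ε r : ℝ) : ℝ :=
  if ε ≤ r then 0 else π / (2 * ε) * cos (π * r / (2 * ε))

theorem rhoEps_eq_rhoProfile (d : ℕ) (ε : ℝ) : rhoEps d ε = rhoProfile ε ∘ norm := rfl

theorem hasDerivAt_pi_mul_div (ε r : ℝ) :
    HasDerivAt (fun r => π * r / (2 * ε)) (π / (2 * ε)) r := by
  simpa using ((hasDerivAt_id r).const_mul π).div_const (2 * ε)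

variable {ε : ℝ}

theorem pi_mul_div_two_mul_self (hε : ε ≠ 0) : π * ε / (2 * ε) = π / 2 := by
  field_simp

theorem hasDerivAt_rhoProfile (hε : 0 < ε) (r : ℝ) :
    HasDerivAt (rhoProfile ε) (rhoProfileDeriv ε r) r := by
  refine hasDerivAt_ite_le (a := ε) (f := fun x => x - (1 - 2 / π) * ε)
    (g := fun x => (2 * ε / π) * (1 - cos (π * x / (2 * ε)))) (f' := fun _ => 1)
    (g' := fun x => sin (π * x / (2 * ε)))
    (fun x => (hasDerivAt_id x).sub_const _) (fun x => ?_) ?_ ?_ r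
  · refine (((hasDerivAt_pi_mul_div ε x).cos.const_sub 1).const_mul (2 * ε / π)).congr_deriv ?_
    field_simp [hε.ne', pi_ne_zero]
  · simp [pi_mul_div_two_mul_self hε.ne']
    ring
  · simp [pi_mul_div_two_mul_self hε.ne']

theorem hasDerivAt_rhoProfileDeriv (hε : 0 < ε) (r : ℝ) :
    HasDerivAt (rhoProfileDeriv ε) (rhoProfileDeriv2 ε r) r := by
  refine hasDerivAt_ite_le (a := ε) (f := fun _ => (1 : ℝ))
    (g := fun x => sin (π * x / (2 * ε))) (f' := fun _ => 0)
    (g' := fun x => π / (2 * ε) * cos (π * x / (2 * ε)))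
    (fun x => hasDerivAt_const x 1) (fun x => ?_) ?_ ?_ r
  · exact (hasDerivAt_pi_mul_div ε x).sin.congr_deriv (mul_comm _ _)
  · simp [pi_mul_div_two_mul_self hε.ne']
  · simp [pi_mul_div_two_mul_self hε.ne']

theorem continuous_rhoProfileDeriv2 (hε : 0 < ε) : Continuous (rhoProfileDeriv2 ε) := by
  refine Continuous.if_le continuous_const (by fun_prop) continuous_const continuous_id ?_
  rintro r rfl
  simp [pi_mul_div_two_mul_self hε.ne']

theorem contDiff_rhoProfile (hε : 0 < ε) : ContDiff ℝ 2 (rhoProfile ε) :=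
  contDiff_two_of_hasDerivAt (hasDerivAt_rhoProfile hε) (hasDerivAt_rhoProfileDeriv hε)
    (continuous_rhoProfileDeriv2 hε)

end Profile

noncomputable def cosSqrtCoeff (n : ℕ) : ℝ := (-1) ^ n / (2 * n)!

noncomputable def cosSqrt : ℝ → ℝ := ofScalarsSum cosSqrtCoeff

theorem norm_cosSqrtCoeff (n : ℕ) : ‖cosSqrtCoeff n‖ = ((2 * n)! : ℝ)⁻¹ := by
  simp [cosSqrtCoeff]

theorem radius_ofScalars_cosSqrtCoeff : (ofScalars ℝ cosSqrtCoeff).radius = ⊤ := by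
  refine radius_eq_top_of_summable_norm _ fun r => ?_
  refine (Real.summable_pow_div_factorial r).of_nonneg_of_le (fun n => by positivity) fun n => ?_
  rw [ofScalars_norm, norm_cosSqrtCoeff, inv_mul_eq_div]
  gcongr
  omega

theorem contDiff_cosSqrt {n : WithTop ℕ∞} : ContDiff ℝ n cosSqrt := by
  have h := (ofScalars ℝ cosSqrtCoeff).hasFPowerSeriesOnBall
    (radius_ofScalars_cosSqrtCoeff ▸ ENNReal.zero_lt_top)
  rw [radius_ofScalars_cosSqrtCoeff] at h
  exact (Metric.eball_top (0 : ℝ) ▸ h.analyticOnNhd).contDiff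

theorem cosSqrt_sq (x : ℝ) : cosSqrt (x ^ 2) = cos x := by
  rw [cosSqrt, ofScalarsSum_eq_tsum, cos_eq_tsum]
  refine tsum_congr fun n => ?_
  simp only [cosSqrtCoeff, smul_eq_mul, ← pow_mul]
  ring

theorem rhoEps_eventuallyEq_cosSqrt (d : ℕ) {ε : ℝ} (hε : 0 < ε) :
    rhoEps d ε =ᶠ[nhds 0]
      fun z => (2 * ε / π) * (1 - cosSqrt ((π / (2 * ε)) ^ 2 * ‖z‖ ^ 2)) := by
  filter_upwards [Metric.ball_mem_nhds 0 hε] with z hz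
  rw [mem_ball_zero_iff] at hz
  rw [rhoEps, if_neg hz.not_ge, ← mul_pow, ← cosSqrt_sq]
  ring_nf

theorem rhoEps_contDiff_two_general (d : ℕ) (ε : ℝ) (hε : 0 < ε) :
    ContDiff ℝ 2 (rhoEps d ε) := by
  refine contDiff_iff_contDiffAt.mpr fun z => ?_
  rcases eq_or_ne z 0 with rfl | hz
  · have hsmooth : ContDiff ℝ 2 fun z : EuclideanSpace ℝ (Fin d) =>
        (2 * ε / π) * (1 - cosSqrt ((π / (2 * ε)) ^ 2 * ‖z‖ ^ 2)) :=
      contDiff_const.mul (contDiff_const.sub (contDiff_cosSqrt.comp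
        (contDiff_const.mul (contDiff_norm_sq ℝ))))
    exact hsmooth.contDiffAt.congr_of_eventuallyEq (rhoEps_eventuallyEq_cosSqrt d hε)
  · rw [rhoEps_eq_rhoProfile]
    exact (contDiff_rhoProfile hε).contDiffAt.comp z (contDiffAt_norm ℝ hz)

/-- `ρ_ε` is of class `C²` on all of `ℝ^d`. -/
theorem rhoEps_contDiff_two (d : ℕ) (hd : 1 ≤ d) (ε : ℝ) (hε : 0 < ε) :
    ContDiff ℝ 2 (rhoEps d ε) :=
  rhoEps_contDiff_two_general d ε hε
end

section
/- Let V be a real normed vector space, let L : V → ℝ and D : V → ℝ be linear maps, let j : V → ℝ be a convex function, and let u ∈ V be such that for every w ∈ V the function h ↦ j(u + h w) is differentiable at h = 0 with derivative D(w). Then u satisfies the variational inequality ∀ v ∈ V: L(v − u) + j(v) − j(u) ≥ 0 if and only if u satisfies the variational equation ∀ v ∈ V: L(v) + D(v) = 0. -/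
open Topology Filter


/-- abstract equivalence between a variational inequality with a convex
barrier functional `j` and the corresponding variational equation with the Gâteaux
derivative `D` of `j` at `u`: with `L, D : V → ℝ` linear, `j` convex, and
`h ↦ j(u + h w)` differentiable at `0` with derivative `D(w)` for every `w`, one has
`(∀ v, L(v − u) + j(v) − j(u) ≥ 0) ↔ (∀ v, L(v) + D(v) = 0)`. -/
theorem variational_inequality_iff_equation
    {V : Type*} [NormedAddCommGroup V] [NormedSpace ℝ V]
    (L D : V →ₗ[ℝ] ℝ) (j : V → ℝ) (hj : ConvexOn ℝ Set.univ j) (u : V)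
    (hD : ∀ w : V, HasDerivAt (fun h : ℝ => j (u + h • w)) (D w) 0) :
    (∀ v : V, L (v - u) + j v - j u ≥ 0) ↔ (∀ v : V, L v + D v = 0) := by
  constructor
  · intro hVI w
    -- consider f h = h * L w + (j (u + h • w) - j u); it has min at 0
    set f : ℝ → ℝ := fun h => h * L w + (j (u + h • w) - j u) with hf
    have hderiv : HasDerivAt f (L w + D w) 0 := by
      have h1 : HasDerivAt (fun h : ℝ => h * L w) (L w) 0 := by
        simpa using hasDerivAt_mul_const (L w)
      exact h1.add ((hD w).sub_const (j u))
    have hmin : IsLocalMin f 0 := by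
      apply Filter.Eventually.of_forall
      intro h
      have := hVI (u + h • w)
      have hL : L (u + h • w - u) = h * L w := by
        simp [smul_eq_mul]
      show f 0 ≤ f h
      simp only [hf, hL] at this ⊢
      simp only [zero_mul, zero_smul, add_zero]
      linarith [this]
    exact hmin.hasDerivAt_eq_zero hderiv
  · intro hVE v
    set w : V := v - u with hw
    have hLw : L w + D w = 0 := hVE w
    -- convexity: slope at 0 of g(h) = j(u + h•w) is ≤ j v - j u for h ∈ (0,1)
    set g : ℝ → ℝ := fun h => j (u + h • w) with hg
    have hslope : Filter.Tendsto (slope g 0) (𝓝[>] (0:ℝ)) (𝓝 (D w)) :=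
      ((hasDerivAt_iff_tendsto_slope.mp (hD w)).mono_left
        (nhdsWithin_mono _ fun x hx => ne_of_gt hx))
    have hle : D w ≤ j v - j u := by
      refine le_of_tendsto hslope ?_
      filter_upwards [Ioo_mem_nhdsGT_of_mem (Set.left_mem_Ico.mpr one_pos)] with h hh
      obtain ⟨h0, h1⟩ := hh
      have hconv := hj.2 (Set.mem_univ u) (Set.mem_univ v)
        (show (0:ℝ) ≤ 1 - h by linarith) h0.le (by ring)
      have key : u + h • w = (1 - h) • u + h • v := by
        rw [hw]; module
      have : g h ≤ (1 - h) * j u + h * j v := by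
        rw [hg]; simpa [key, smul_eq_mul] using hconv
      have hg0 : g 0 = j u := by simp [hg]
      rw [slope_def_field, hg0, sub_zero, div_le_iff₀ h0]
      nlinarith [this]
    have : L w + (j v - j u) ≥ 0 := by
      have : L w = -(D w) := by linarith
      linarith
    have : L (v - u) + (j v - j u) ≥ 0 := by rwa [← hw]
    linarith
end
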